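/- Let G = (V,E) be a finite simple graph. Then the independence number of G is at most 2 if and only if for every linear order ≺ on V the Cornaz–Jost graph R≺(G) equals the line graph of the complement of G, i.e., any two distinct arcs sharing an endpoint are adjacent in R≺(G). -/

import Mathlib

open scoped Classical

/-- `(u, v)` is an arc of `G` w.r.t. the order `lt`: `u ≺ v` and `uv ∉ E`. -/
abbrev IsArcPair {V : Type*} (G : SimpleGraph V) (lt : V → V → Prop) (p : V × V) : Prop :=
  lt p.1 p.2 ∧ ¬ G.Adj p.1 p.2

/-- The set of arcs of `G` (ordered non-edges), as a type. -/
abbrev Arc {V : Type*} (G : SimpleGraph V) (lt : V → V → Prop) : Type _ :=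
  {p : V × V // IsArcPair G lt p}

/-- A proper coloring of a graph, as a color function. -/
def ProperColoring {W : Type*} (H : SimpleGraph W) (c : W → ℕ) : Prop :=
  ∀ u v, H.Adj u v → c u ≠ c v

/-- `u` is the `lt`-least element of its color class under `c`. -/
def IsClassRep {V : Type*} (lt : V → V → Prop) (c : V → ℕ) (u : V) : Prop :=
  ∀ w, c w = c u → u = w ∨ lt u w

/-- The representative vector of a coloring `c`: `x (u,v) = 1` iff `u` and `v` have the
same color and `u` is the `lt`-least element of that color class. -/
noncomputable def repVec {V : Type*} (G : SimpleGraph V) (lt : V → V → Prop) (c : V → ℕ) :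
    Arc G lt → ℝ := fun a =>
  if c a.1.1 = c a.1.2 ∧ IsClassRep lt c a.1.1 then 1 else 0

/-- The coloring polytope: convex hull of representative vectors of proper colorings. -/
noncomputable def COL {V : Type*} (G : SimpleGraph V) (lt : V → V → Prop) :
    Set (Arc G lt → ℝ) :=
  convexHull ℝ {x | ∃ c : V → ℕ, ProperColoring G c ∧ x = repVec G lt c}

/-- A stable (independent) set of a graph. -/
def IsStableSet {W : Type*} (H : SimpleGraph W) (s : Set W) : Prop :=
  ∀ a ∈ s, ∀ b ∈ s, ¬ H.Adj a b

/-- The stable set polytope of a graph. -/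
noncomputable def STAB {W : Type*} (H : SimpleGraph W) : Set (W → ℝ) :=
  convexHull ℝ {x | ∃ s : Set W, IsStableSet H s ∧ x = s.indicator 1}

/-- The Cornaz–Jost graph `R≺(G)`: vertices are the arcs of `G`; two distinct arcs
`(a,b)` and `(c,d)` are adjacent iff they share an endpoint and it is not the case that
`a = c` and `bd ∉ E`. -/
def RGraph {V : Type*} (G : SimpleGraph V) (lt : V → V → Prop) : SimpleGraph (Arc G lt) where
  Adj p q := p ≠ q ∧
    (p.1.1 = q.1.1 ∨ p.1.1 = q.1.2 ∨ p.1.2 = q.1.1 ∨ p.1.2 = q.1.2) ∧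
    ¬ (p.1.1 = q.1.1 ∧ ¬ G.Adj p.1.2 q.1.2)
  symm := by
    constructor
    rintro p q ⟨h1, h2, h3⟩
    refine ⟨h1.symm, ?_, fun hc => h3 ⟨hc.1.symm, fun h => hc.2 (G.symm.symm _ _ h)⟩⟩
    rcases h2 with h | h | h | h
    · exact Or.inl h.symm
    · exact Or.inr (Or.inr (Or.inl h.symm))
    · exact Or.inr (Or.inl h.symm)
    · exact Or.inr (Or.inr (Or.inr h.symm))
  loopless := ⟨fun p h => h.1 rfl⟩

/-- The line graph of the complement of `G`, with the edges of the complement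
identified with the arcs of `G`: two distinct arcs are adjacent iff they share an endpoint. -/
def lineGraphArc {V : Type*} (G : SimpleGraph V) (lt : V → V → Prop) :
    SimpleGraph (Arc G lt) where
  Adj p q := p ≠ q ∧
    (p.1.1 = q.1.1 ∨ p.1.1 = q.1.2 ∨ p.1.2 = q.1.1 ∨ p.1.2 = q.1.2)
  symm := by
    constructor
    rintro p q ⟨h1, h2⟩
    refine ⟨h1.symm, ?_⟩
    rcases h2 with h | h | h | h
    · exact Or.inl h.symm
    · exact Or.inr (Or.inr (Or.inl h.symm))
    · exact Or.inr (Or.inl h.symm)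
    · exact Or.inr (Or.inr (Or.inr h.symm))
  loopless := ⟨fun p h => h.1 rfl⟩

/-- The independence number of `H` is at most 2. -/
def AlphaLeTwo {W : Type*} (H : SimpleGraph W) : Prop :=
  ∀ s : Set W, IsStableSet H s → s.ncard ≤ 2

/-- The chromatic number of a graph, as a natural number. -/
noncomputable def chromNum {W : Type*} (H : SimpleGraph W) : ℕ :=
  sInf {n : ℕ | ∃ c : W → ℕ, ProperColoring H c ∧ ∀ v, c v < n}

/-- `H` contains a copy of `F` as a (not necessarily induced) subgraph. -/
def ContainsCopy {α β : Type*} (F : SimpleGraph α) (H : SimpleGraph β) : Prop :=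
  ∃ f : α → β, Function.Injective f ∧ ∀ a b, F.Adj a b → H.Adj (f a) (f b)

/-- `H` contains an induced copy of `F`. -/
def ContainsInducedCopy {α β : Type*} (F : SimpleGraph α) (H : SimpleGraph β) : Prop :=
  ∃ f : α → β, Function.Injective f ∧ ∀ a b, H.Adj (f a) (f b) ↔ F.Adj a b

/-- The paw: a triangle `{0,1,2}` plus the vertex `3` adjacent only to `2`. -/
def pawGraph : SimpleGraph (Fin 4) :=
  SimpleGraph.fromEdgeSet {s(0, 1), s(0, 2), s(1, 2), s(2, 3)}

/-- The kite: the paw plus the vertex `4` adjacent only to `3` (the paw's degree-1 vertex). -/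
def kiteGraph : SimpleGraph (Fin 5) :=
  SimpleGraph.fromEdgeSet {s(0, 1), s(0, 2), s(1, 2), s(2, 3), s(3, 4)}

/-- The claw `K_{1,3}`: vertex `0` adjacent to `1`, `2`, `3`. -/
def clawGraph : SimpleGraph (Fin 4) :=
  SimpleGraph.fromEdgeSet {s(0, 1), s(0, 2), s(0, 3)}

/-- A graph is claw-free if it has no induced copy of `K_{1,3}`. -/
def ClawFree {W : Type*} (H : SimpleGraph W) : Prop :=
  ¬ ContainsInducedCopy clawGraph H

/-- A graph is quasi-line if the neighborhood of every vertex can be partitioned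
into two cliques. -/
def QuasiLine {W : Type*} (H : SimpleGraph W) : Prop :=
  ∀ v : W, ∃ K₁ K₂ : Set W, Disjoint K₁ K₂ ∧ K₁ ∪ K₂ = {w | H.Adj v w} ∧
    H.IsClique K₁ ∧ H.IsClique K₂

/-- A graph is hypomatchable if deleting any vertex leaves a graph with a perfect matching. -/
def Hypomatchable {W : Type*} (H : SimpleGraph W) : Prop :=
  ∀ u : W, ∃ M : (H.induce {v | v ≠ u}).Subgraph, M.IsPerfectMatching

/-- A graph is 2-connected: connected, at least 3 vertices, and deleting any vertex
leaves it connected. -/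
def TwoConnected {W : Type*} [Fintype W] (H : SimpleGraph W) : Prop :=
  H.Connected ∧ 3 ≤ Fintype.card W ∧ ∀ u : W, (H.induce {v | v ≠ u}).Connected

/-- A set of arcs is a matching of the complement of `G`: no two distinct arcs share
an endpoint. -/
def IsMatchingArcSet {V : Type*} (G : SimpleGraph V) (lt : V → V → Prop)
    (m : Set (Arc G lt)) : Prop :=
  ∀ p ∈ m, ∀ q ∈ m, p ≠ q →
    ¬ (p.1.1 = q.1.1 ∨ p.1.1 = q.1.2 ∨ p.1.2 = q.1.1 ∨ p.1.2 = q.1.2)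

/-- The matching polytope of the complement of `G`, viewed in `ℝ^A` via the
identification of edges of the complement with arcs. -/
noncomputable def MATCHarcs {V : Type*} (G : SimpleGraph V) (lt : V → V → Prop) :
    Set (Arc G lt → ℝ) :=
  convexHull ℝ {x | ∃ m : Set (Arc G lt), IsMatchingArcSet G lt m ∧ x = m.indicator 1}

/-- Restriction of a vector indexed by arcs of `G` to the arcs of an induced subgraph. -/
def restrictVec {V : Type*} (G : SimpleGraph V) (lt : V → V → Prop) (W : Set V)
    (x : Arc G lt → ℝ) : Arc (G.induce W) (fun a b => lt ↑a ↑b) → ℝ :=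
  fun a => x ⟨(↑a.1.1, ↑a.1.2), a.2.1, a.2.2⟩

/-
`R≺(G)` is always a subgraph of the line graph of the complement, and the only pairs of
arcs on which they can differ are `(a,b)` and `(a,c)` with a common tail `a` and `bc ∉ E`.
Such a pair is exactly a stable triple `{a, b, c}` whose `≺`-least element is `a`. So if
`α(G) ≤ 2` no order produces one, and conversely a stable triple `{a, b, c}` yields one for
any linear order that puts `a` first.
-/

section CornazJost

variable {V : Type*}

theorem alphaLeTwo_iff (G : SimpleGraph V) :
    AlphaLeTwo G ↔ ∀ a b c, a ≠ b → a ≠ c → b ≠ c → ¬ G.Adj a b → ¬ G.Adj a c → G.Adj b c := by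
  constructor
  · intro h a b c hab hac hbc hnab hnac
    by_contra hnbc
    have hstable : IsStableSet G {a, b, c} := by
      intro x hx y hy hxy
      simp only [Set.mem_insert_iff, Set.mem_singleton_iff] at hx hy
      rcases hx with rfl | rfl | rfl <;> rcases hy with rfl | rfl | rfl <;>
        first | exact G.loopless.irrefl _ hxy | simp_all [G.adj_comm]
    have hcard : 2 < ({a, b, c} : Set V).ncard :=
      (Set.two_lt_ncard).mpr ⟨a, by simp, b, by simp, c, by simp, hab, hac, hbc⟩
    exact (h _ hstable).not_gt hcard
  · intro h s hs
    by_contra! hcard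
    have hfin : s.Finite := Set.finite_of_ncard_pos (by omega)
    obtain ⟨a, ha, b, hb, c, hc, hab, hac, hbc⟩ := (Set.two_lt_ncard hfin).mp hcard
    exact hs b hb c hc (h a b c hab hac hbc (hs a ha b hb) (hs a ha c hc))

theorem RGraph_eq_lineGraphArc_iff (G : SimpleGraph V) (lt : V → V → Prop) :
    RGraph G lt = lineGraphArc G lt ↔
      ∀ a b c, lt a b → lt a c → b ≠ c → ¬ G.Adj a b → ¬ G.Adj a c → G.Adj b c := by
  constructor
  · intro h a b c hab hac hbc hnab hnac
    let p : Arc G lt := ⟨(a, b), hab, hnab⟩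
    let q : Arc G lt := ⟨(a, c), hac, hnac⟩
    have hpq : p ≠ q := fun he => hbc (congrArg (fun r => r.1.2) he)
    have hadj : (RGraph G lt).Adj p q := h ▸ ⟨hpq, Or.inl rfl⟩
    by_contra hnbc
    exact hadj.2.2 ⟨rfl, hnbc⟩
  · intro h
    ext p q
    refine ⟨fun hpq => ⟨hpq.1, hpq.2.1⟩, fun ⟨hpq, hshare⟩ => ⟨hpq, hshare, ?_⟩⟩
    rintro ⟨htail, hnadj⟩
    have hhead : p.1.2 ≠ q.1.2 := fun he => hpq (Subtype.ext (Prod.ext htail he))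
    exact hnadj (h _ _ _ p.2.1 (htail ▸ q.2.1) hhead p.2.2 (htail ▸ q.2.2))

theorem exists_isStrictTotalOrder_forall_lt (a : V) :
    ∃ lt : V → V → Prop, IsStrictTotalOrder V lt ∧ ∀ x, x ≠ a → lt a x := by
  let e := embeddingToCardinal (α := V)
  let key : V → WithBot _ := fun x => if x = a then ⊥ else WithBot.some (e x)
  have hkey : key.Injective := by
    intro x y hxy
    by_cases hx : x = a <;> by_cases hy : y = a <;> simp_all [key]
  refine ⟨Function.onFun (· < ·) key, hkey.isStrictTotalOrder_onFun (· < ·), fun x hx => ?_⟩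
  simp [Function.onFun, key, hx]

end CornazJost

theorem statement5_general {V : Type*}
    (G : SimpleGraph V) :
    AlphaLeTwo G ↔
      ∀ lt : V → V → Prop, IsStrictTotalOrder V lt → RGraph G lt = lineGraphArc G lt := by
  simp_rw [alphaLeTwo_iff, RGraph_eq_lineGraphArc_iff]
  constructor
  · intro h lt _ a b c hab hac hbc hnab hnac
    exact h a b c (ne_of_irrefl hab) (ne_of_irrefl hac) hbc hnab hnac
  · intro h a b c hab hac hbc hnab hnac
    obtain ⟨lt, hlt, ha_least⟩ := exists_isStrictTotalOrder_forall_lt a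
    exact h lt hlt a b c (ha_least b hab.symm) (ha_least c hac.symm) hbc hnab hnac

/-- `α(G) ≤ 2` iff for every linear order `≺` on `V`, the Cornaz–Jost graph
`R≺(G)` equals the line graph of the complement of `G`. -/
theorem statement5 {V : Type*} [Fintype V] [DecidableEq V]
    (G : SimpleGraph V) [DecidableRel G.Adj] :
    AlphaLeTwo G ↔
      ∀ lt : V → V → Prop, IsStrictTotalOrder V lt → RGraph G lt = lineGraphArc G lt :=
  statement5_general G
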